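/- Let f(x) = x² - Px + Q with integers P, Q, let Δ = P² - 4Q, and let n be an odd integer with gcd(n, 2QΔ) = 1. If (Δ/n) = 1 (Jacobi symbol) and x^n ≡ x in ℤ[x]/(n, f(x)), then U_{n-1}(P,Q) ≡ 0 (mod n). If (Δ/n) = -1 and x^n ≡ P - x in ℤ[x]/(n, f(x)), then U_{n+1}(P,Q) ≡ 0 (mod n). -/

import Mathlib

open Polynomial

/-- The Lucas sequence `U n (P, Q)`: `U₀ = 0`, `U₁ = 1`, `Uₙ = P·Uₙ₋₁ - Q·Uₙ₋₂`. -/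
def lucasU (P Q : ℤ) : ℕ → ℤ
  | 0 => 0
  | 1 => 1
  | n + 2 => P * lucasU P Q (n + 1) - Q * lucasU P Q n

lemma lucas_aux {S : Type*} [CommRing S] (P Q : ℤ) (α β : S)
    (hs : α + β = (P : S)) (hp : α * β = (Q : S)) :
    ∀ k, ((lucasU P Q k : ℤ) : S) * (α - β) = α ^ k - β ^ k := by
  have H : ∀ k, ((lucasU P Q k : ℤ) : S) * (α - β) = α ^ k - β ^ k ∧
      ((lucasU P Q (k+1) : ℤ) : S) * (α - β) = α ^ (k+1) - β ^ (k+1) := by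
    intro k
    induction k with
    | zero => simp [lucasU]
    | succ m ih =>
      refine ⟨ih.2, ?_⟩
      have h2 : lucasU P Q (m+2) = P * lucasU P Q (m+1) - Q * lucasU P Q m := rfl
      rw [h2]
      push_cast
      rw [← hs, ← hp, sub_mul, mul_assoc, mul_assoc, ih.1, ih.2]
      ring
  exact fun k => (H k).1

theorem stmt_13 (P Q : ℤ) (Δ : ℤ) (hΔ : Δ = P ^ 2 - 4 * Q)
    (n : ℕ) (hodd : Odd n) (hcop : Int.gcd (n : ℤ) (2 * Q * Δ) = 1)
    (f : (ZMod n)[X]) (hf : f = X ^ 2 - C (P : ZMod n) * X + C (Q : ZMod n)) :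
    (jacobiSym Δ n = 1 → f ∣ (X ^ n - X) → (n : ℤ) ∣ lucasU P Q (n - 1)) ∧
      (jacobiSym Δ n = -1 → f ∣ (X ^ n - (C (P : ZMod n) - X)) →
        (n : ℤ) ∣ lucasU P Q (n + 1)) := by
  rcases eq_or_ne n 1 with rfl | hn1
  · exact ⟨fun _ _ => one_dvd _, fun _ _ => one_dvd _⟩
  have hn0 : n ≠ 0 := by rintro rfl; exact (Nat.not_odd_iff_even.mpr (Even.zero)) hodd
  haveI : Fact (1 < n) := ⟨by omega⟩
  haveI : NeZero n := ⟨hn0⟩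
  -- units
  have hcop' : IsCoprime (n : ℤ) (2 * Q * Δ) := Int.isCoprime_iff_gcd_eq_one.mpr hcop
  have hu : IsUnit (((2 * Q * Δ : ℤ) : ZMod n)) := by
    have h := hcop'.map (Int.castRingHom (ZMod n))
    have hzero : ((n : ℤ) : ZMod n) = 0 := by push_cast; exact ZMod.natCast_self n
    rw [show (Int.castRingHom (ZMod n)) ((n : ℤ)) = 0 from hzero,
      show (Int.castRingHom (ZMod n)) (2 * Q * Δ) = ((2 * Q * Δ : ℤ) : ZMod n) from rfl,
      isCoprime_zero_left] at h
    exact h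
  have hQz : IsUnit ((Q : ZMod n)) := by
    have : ((2 * Q * Δ : ℤ) : ZMod n) = ((2 : ZMod n) * (Q : ℤ) * (Δ : ℤ)) := by push_cast; ring
    rw [this] at hu
    exact isUnit_of_mul_isUnit_right (isUnit_of_mul_isUnit_left hu)
  have hΔz : IsUnit ((Δ : ZMod n)) := by
    have : ((2 * Q * Δ : ℤ) : ZMod n) = ((2 : ZMod n) * (Q : ℤ) * (Δ : ℤ)) := by push_cast; ring
    rw [this] at hu
    exact isUnit_of_mul_isUnit_right hu
  set S := AdjoinRoot f with hS
  set α : S := AdjoinRoot.root f with hαdef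
  have hroot : α ^ 2 - ((P : ℤ) : S) * α + ((Q : ℤ) : S) = 0 := by
    have hq : ∀ g : (ZMod n)[X], g = X ^ 2 - C (P : ZMod n) * X + C (Q : ZMod n) →
        AdjoinRoot.mk f g = 0 → α ^ 2 - ((P : ℤ) : S) * α + ((Q : ℤ) : S) = 0 := by
      rintro g rfl hg
      simp only [map_add, map_sub, map_mul, map_pow, AdjoinRoot.mk_X, AdjoinRoot.mk_C] at hg
      rw [show (AdjoinRoot.of f) ((P : ZMod n)) = ((P : ℤ) : S) from map_intCast _ P,
        show (AdjoinRoot.of f) ((Q : ZMod n)) = ((Q : ℤ) : S) from map_intCast _ Q] at hg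
      exact hg
    exact hq f hf (AdjoinRoot.mk_self)
  set β : S := ((P : ℤ) : S) - α with hβdef
  have hs : α + β = ((P : ℤ) : S) := by rw [hβdef]; ring
  have hp : α * β = ((Q : ℤ) : S) := by rw [hβdef]; linear_combination -hroot
  -- the conjugation automorphism
  have hβf : f.eval₂ (AdjoinRoot.of f) β = 0 := by
    have hq : ∀ g : (ZMod n)[X], g = X ^ 2 - C (P : ZMod n) * X + C (Q : ZMod n) →
        g.eval₂ (AdjoinRoot.of f) β = 0 := by
      rintro g rfl
      simp only [eval₂_add, eval₂_sub, eval₂_mul, eval₂_pow, eval₂_X, eval₂_C]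
      rw [show (AdjoinRoot.of f) ((P : ZMod n)) = ((P : ℤ) : S) from map_intCast _ P,
        show (AdjoinRoot.of f) ((Q : ZMod n)) = ((Q : ℤ) : S) from map_intCast _ Q, hβdef]
      linear_combination hroot
    exact hq f hf
  set σ : S →+* S := AdjoinRoot.lift (AdjoinRoot.of f) β hβf with hσdef
  have hσα : σ α = β := AdjoinRoot.lift_root hβf
  have hσβ : σ β = α := by
    rw [hβdef, map_sub, map_intCast, hσα]
    ring
  -- injectivity of the base
  have hmon : f.Monic := by
    rw [hf]
    monicity!
  have hnd : f.natDegree = 2 := by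
    rw [hf]
    compute_degree!
  have hinj : ∀ c : ZMod n, algebraMap (ZMod n) S c = 0 → c = 0 := by
    intro c hc
    rw [AdjoinRoot.algebraMap_eq, ← AdjoinRoot.mk_C, AdjoinRoot.mk_eq_zero] at hc
    by_contra h
    obtain ⟨t, ht⟩ := hc
    have ht0 : t ≠ 0 := by
      rintro rfl
      rw [mul_zero] at ht
      exact h (by simpa using ht)
    have hdd := hmon.natDegree_mul' ht0
    rw [← ht, Polynomial.natDegree_C, hnd] at hdd
    omega
  -- α - β is a unit
  have hsq : (α - β) * (α - β) = ((Δ : ℤ) : S) := by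
    rw [hΔ]; push_cast
    rw [hβdef]
    erw [Int.cast_mul]; linear_combination 4 * hroot
  have hΔS : IsUnit ((Δ : ℤ) : S) := by
    have := hΔz.map (algebraMap (ZMod n) S)
    rwa [map_intCast] at this
  have hsubu : IsUnit (α - β) := isUnit_of_mul_isUnit_left (hsq ▸ hΔS)
  have hQS : IsUnit ((Q : ℤ) : S) := by
    have := hQz.map (algebraMap (ZMod n) S)
    rwa [map_intCast] at this
  have key := lucas_aux P Q α β hs hp
  have finish : ∀ m : ℕ, ((lucasU P Q m : ℤ) : S) = 0 → (n : ℤ) ∣ lucasU P Q m := by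
    intro m hm
    have : ((lucasU P Q m : ℤ) : ZMod n) = 0 := by
      apply hinj
      rw [map_intCast]
      exact hm
    exact (ZMod.intCast_zmod_eq_zero_iff_dvd _ n).mp this
  constructor
  · intro _ hdvd
    have hdvd' : (AdjoinRoot.mk f) (X ^ n - X) = 0 := AdjoinRoot.mk_eq_zero.mpr hdvd
    rw [map_sub, map_pow, AdjoinRoot.mk_X, sub_eq_zero] at hdvd'
    -- hdvd' : α ^ n = α
    have hβn : β ^ n = β := by
      calc β ^ n = σ (α ^ n) := by rw [map_pow, hσα]
        _ = β := by rw [hdvd', hσα]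
    have hmain : ((Q : ℤ) : S) * (((lucasU P Q (n-1) : ℤ) : S) * (α - β)) = 0 := by
      rw [key (n-1), ← hp]
      have hn : n - 1 + 1 = n := by omega
      calc α * β * (α ^ (n-1) - β ^ (n-1))
          = β * α ^ (n-1+1) - α * β ^ (n-1+1) := by ring
        _ = β * α - α * β := by rw [hn, hdvd', hβn]
        _ = 0 := by ring
    apply finish
    have h1 : (((Q : ℤ) : S) * (α - β)) * ((lucasU P Q (n-1) : ℤ) : S) = 0 := by
      rw [← hmain]; ring
    exact ((hQS.mul hsubu).mul_right_eq_zero).mp h1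
  · intro _ hdvd
    have hdvd' : (AdjoinRoot.mk f) (X ^ n - (C ((P : ZMod n)) - X)) = 0 :=
      AdjoinRoot.mk_eq_zero.mpr hdvd
    rw [map_sub, map_sub, map_pow, AdjoinRoot.mk_X, AdjoinRoot.mk_C, sub_eq_zero] at hdvd'
    rw [show (AdjoinRoot.of f) ((P : ZMod n)) = ((P : ℤ) : S) from map_intCast _ P] at hdvd'
    -- hdvd' : α ^ n = β
    have hαn : α ^ n = β := hdvd'
    have hβn : β ^ n = α := by
      calc β ^ n = σ (α ^ n) := by rw [map_pow, hσα]
        _ = α := by rw [hαn, hσβ]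
    have hmain : ((lucasU P Q (n+1) : ℤ) : S) * (α - β) = 0 := by
      rw [key (n+1), pow_succ, pow_succ, hαn, hβn]
      ring
    apply finish
    have h1 : (α - β) * ((lucasU P Q (n+1) : ℤ) : S) = 0 := by rw [← hmain]; ring
    exact (hsubu.mul_right_eq_zero).mp h1
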